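/- arXiv:2502.13811 — 8 statements merged into one kernel-verified Lean document; each statement's English description precedes it below -/
import Mathlib

section
/- Let Optimizer : ℝ^r × Ξ → ℝ^r × Ξ be an arbitrary state-update map, S : ℝ^{r×d} a matrix, and L : ℝ^d → ℝ a differentiable loss. Define the linearly-transformed-gradient trajectory by (Δ^(t), ξ^(t+1)) = Optimizer(S · ∇L(Θ^(t)), ξ^(t)) and Θ^(t+1) = Θ^(t) + Sᵀ Δ^(t). Define the adapter trajectory by Λ^(0) = 0, ζ^(0) = ξ^(0), (δ^(t), ζ^(t+1)) = Optimizer(∇_Λ [L(Θ^(0) + Sᵀ Λ)](Λ^(t)), ζ^(t)) and Λ^(t+1) = Λ^(t) + δ^(t). Then for all t ≥ 0, Θ^(t) = Θ^(0) + Sᵀ Λ^(t) and ξ^(t) = ζ^(t). -/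
open Matrix

/-- Equivalence of linearly-transformed-gradient training and linear-adapter training
(Theorem 3.1): with equal initial optimizer states and adapter initialized to zero,
`Θ^(t) = Θ^(0) + Sᵀ Lam^(t)` and the optimizer states coincide for all `t`. -/
theorem grad_transform_eq_adapter
    (r d : ℕ) (Ξ : Type*)
    (Optimizer : (Fin r → ℝ) × Ξ → (Fin r → ℝ) × Ξ)
    (S : Matrix (Fin r) (Fin d) ℝ)
    (gradL : (Fin d → ℝ) → (Fin d → ℝ))
    (Θ : ℕ → Fin d → ℝ) (ξ : ℕ → Ξ)
    (Lam : ℕ → Fin r → ℝ) (ζ : ℕ → Ξ)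
    (hΘ : ∀ t, Θ (t + 1) =
      Θ t + Sᵀ.mulVec (Optimizer (S.mulVec (gradL (Θ t)), ξ t)).1)
    (hξ : ∀ t, ξ (t + 1) = (Optimizer (S.mulVec (gradL (Θ t)), ξ t)).2)
    (hLam0 : Lam 0 = 0) (hζ0 : ζ 0 = ξ 0)
    (hLam : ∀ t, Lam (t + 1) =
      Lam t + (Optimizer (S.mulVec (gradL (Θ 0 + Sᵀ.mulVec (Lam t))), ζ t)).1)
    (hζ : ∀ t, ζ (t + 1) =
      (Optimizer (S.mulVec (gradL (Θ 0 + Sᵀ.mulVec (Lam t))), ζ t)).2) :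
    ∀ t, Θ t = Θ 0 + Sᵀ.mulVec (Lam t) ∧ ξ t = ζ t := by
  intro t
  induction t with
  | zero =>
    simp [hLam0, hζ0, Matrix.mulVec_zero]
  | succ t ih =>
    obtain ⟨h1, h2⟩ := ih
    constructor
    · rw [hΘ, hLam, Matrix.mulVec_add, h1, h2, add_assoc]
    · rw [hξ, hζ, h1, h2]
end

section
/- If Λ^(0) is not necessarily zero but Θ^(0) = Θ̃ + Sᵀ Λ^(0) for some Θ̃ ∈ ℝ^d, then the trajectory of transformed-gradient training on Θ starting from Θ^(0) and the trajectory of adapter training of Λ (with base Θ̃ frozen) starting from Λ^(0), with equal initial optimizer states, satisfy Θ^(t) = Θ̃ + Sᵀ Λ^(t) for all t. -/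
open Matrix

/-- Remark after Theorem 3.1: if the adapter is not initialized to zero but
`Θ^(0) = Θ̃ + Sᵀ Λ^(0)`, the transformed-gradient trajectory on `Θ` and the adapter
trajectory on `Λ` (with frozen base `Θ̃`), started from equal optimizer states,
satisfy `Θ^(t) = Θ̃ + Sᵀ Λ^(t)` for all `t`. -/
theorem grad_transform_eq_adapter_nonzero_init
    (r d : ℕ) (Ξ : Type*)
    (Optimizer : (Fin r → ℝ) × Ξ → (Fin r → ℝ) × Ξ)
    (S : Matrix (Fin r) (Fin d) ℝ)
    (gradL : (Fin d → ℝ) → (Fin d → ℝ))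
    (Θtilde : Fin d → ℝ)
    (Θ : ℕ → Fin d → ℝ) (ξ : ℕ → Ξ)
    (Lam : ℕ → Fin r → ℝ) (ζ : ℕ → Ξ)
    (hinit : Θ 0 = Θtilde + Sᵀ.mulVec (Lam 0))
    (hstate0 : ζ 0 = ξ 0)
    (hΘ : ∀ t, Θ (t + 1) =
      Θ t + Sᵀ.mulVec (Optimizer (S.mulVec (gradL (Θ t)), ξ t)).1)
    (hξ : ∀ t, ξ (t + 1) = (Optimizer (S.mulVec (gradL (Θ t)), ξ t)).2)
    (hLam : ∀ t, Lam (t + 1) =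
      Lam t + (Optimizer (S.mulVec (gradL (Θtilde + Sᵀ.mulVec (Lam t))), ζ t)).1)
    (hζ : ∀ t, ζ (t + 1) =
      (Optimizer (S.mulVec (gradL (Θtilde + Sᵀ.mulVec (Lam t))), ζ t)).2) :
    ∀ t, Θ t = Θtilde + Sᵀ.mulVec (Lam t) := by
  have key : ∀ t, Θ t = Θtilde + Sᵀ.mulVec (Lam t) ∧ ζ t = ξ t := by
    intro t
    induction t with
    | zero => exact ⟨hinit, hstate0⟩
    | succ t ih =>
      obtain ⟨h1, h2⟩ := ih
      constructor
      · rw [hΘ, hLam, h1, h2, mulVec_add, add_assoc]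
      · rw [hξ, hζ, h1, h2]
  exact fun t => (key t).1
end

section
/- Training a linear layer's vectorized weight Θ = vec(W) ∈ ℝ^{mn} with the transformed-gradient dynamics using S = Rᵀ ⊗ L (i.e., gradient matrices are transformed as G ↦ L G R and updates are mapped back as Δ ↦ Lᵀ Δ Rᵀ) is equivalent, for any state-update map Optimizer and equal initial optimizer states, to reparameterizing W = W^(0) + Lᵀ A Rᵀ with A^(0) = 0 and training only A with the same Optimizer: the effective weight matrices agree at every step. -/
open Matrix

/-- Proposition 3.3 (Kronecker-factored gradient transformation ↔ MoRA-style adapter):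
training `W` by transforming gradient matrices as `G ↦ L G R`, stepping with an arbitrary
stateful `Optimizer`, and mapping updates back via `Δ ↦ Lᵀ Δ Rᵀ`, coincides at every step
with reparameterizing `W = W^(0) + Lᵀ A Rᵀ`, `A^(0) = 0`, and training only `A` with the
same optimizer and equal initial state. -/
theorem kronecker_grad_transform_eq_adapter
    (m n dL dR : ℕ) (Ξ : Type*)
    (Optimizer : Matrix (Fin dL) (Fin dR) ℝ × Ξ → Matrix (Fin dL) (Fin dR) ℝ × Ξ)
    (L : Matrix (Fin dL) (Fin m) ℝ)
    (R : Matrix (Fin n) (Fin dR) ℝ)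
    (gradL : Matrix (Fin m) (Fin n) ℝ → Matrix (Fin m) (Fin n) ℝ)
    (W : ℕ → Matrix (Fin m) (Fin n) ℝ) (ξ : ℕ → Ξ)
    (A : ℕ → Matrix (Fin dL) (Fin dR) ℝ) (ζ : ℕ → Ξ)
    (hW : ∀ t, W (t + 1) =
      W t + Lᵀ * (Optimizer (L * gradL (W t) * R, ξ t)).1 * Rᵀ)
    (hξ : ∀ t, ξ (t + 1) = (Optimizer (L * gradL (W t) * R, ξ t)).2)
    (hA0 : A 0 = 0) (hζ0 : ζ 0 = ξ 0)
    (hA : ∀ t, A (t + 1) =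
      A t + (Optimizer (L * gradL (W 0 + Lᵀ * A t * Rᵀ) * R, ζ t)).1)
    (hζ : ∀ t, ζ (t + 1) =
      (Optimizer (L * gradL (W 0 + Lᵀ * A t * Rᵀ) * R, ζ t)).2) :
    ∀ t, W t = W 0 + Lᵀ * A t * Rᵀ ∧ ξ t = ζ t := by
  intro t
  induction t with
  | zero => simp [hA0, hζ0]
  | succ t ih =>
    obtain ⟨hWt, hξt⟩ := ih
    have key : L * gradL (W t) * R = L * gradL (W 0 + Lᵀ * A t * Rᵀ) * R := by
      rw [hWt]
    constructor
    · rw [hW t, hA t, hWt, hξt]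
      rw [Matrix.mul_add, Matrix.add_mul, add_assoc]
    · rw [hξ t, hζ t, key, hξt]
end

section
/- GaLore is one-sided LoRA: training W ∈ ℝ^{m×n} (with m ≤ n) by transforming each gradient matrix as G ↦ P G for P ∈ ℝ^{d×m}, applying an arbitrary optimizer in the compressed space, and updating W^(t+1) = W^(t) + Pᵀ Δ^(t), yields exactly the same weight trajectory as freezing W^(0) and P and training only A in the reparameterization W = W^(0) + Pᵀ A with A^(0) = 0 and the same optimizer and initial state. -/
open Matrix

/-- Corollary 3.4 (GaLore is one-sided LoRA): for `m ≤ n`, training `W` by compressing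
gradient matrices as `G ↦ P G` (`P ∈ ℝ^{d×m}`, `d ≤ m`), stepping with an arbitrary
stateful optimizer, and updating `W^(t+1) = W^(t) + Pᵀ Δ^(t)`, yields the same weight
trajectory as freezing `W^(0)` and `P` and training only `A` in `W = W^(0) + Pᵀ A`
with `A^(0) = 0`, the same optimizer, and equal initial state. -/
theorem galore_is_one_sided_lora
    (m n d : ℕ) (hd : d ≤ m) (hmn : m ≤ n) (Ξ : Type*)
    (Optimizer : Matrix (Fin d) (Fin n) ℝ × Ξ → Matrix (Fin d) (Fin n) ℝ × Ξ)
    (P : Matrix (Fin d) (Fin m) ℝ)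
    (gradL : Matrix (Fin m) (Fin n) ℝ → Matrix (Fin m) (Fin n) ℝ)
    (W : ℕ → Matrix (Fin m) (Fin n) ℝ) (ξ : ℕ → Ξ)
    (A : ℕ → Matrix (Fin d) (Fin n) ℝ) (ζ : ℕ → Ξ)
    (hW : ∀ t, W (t + 1) = W t + Pᵀ * (Optimizer (P * gradL (W t), ξ t)).1)
    (hξ : ∀ t, ξ (t + 1) = (Optimizer (P * gradL (W t), ξ t)).2)
    (hA0 : A 0 = 0) (hζ0 : ζ 0 = ξ 0)
    (hA : ∀ t, A (t + 1) = A t + (Optimizer (P * gradL (W 0 + Pᵀ * A t), ζ t)).1)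
    (hζ : ∀ t, ζ (t + 1) = (Optimizer (P * gradL (W 0 + Pᵀ * A t), ζ t)).2) :
    ∀ t, W t = W 0 + Pᵀ * A t ∧ ξ t = ζ t := by
  intro t
  induction t with
  | zero => simp [hA0, hζ0]
  | succ t ih =>
    obtain ⟨h1, h2⟩ := ih
    constructor
    · rw [hW, hA, h1, h2, Matrix.mul_add, add_assoc]
    · rw [hξ, hζ, h1, h2]
end

section
/- Suppose the parameter space ℝ^d decomposes as a product over layers, Θ = (Θ₁, …, Θ_K) with Θ_i ∈ ℝ^{d_i}, and S is block-diagonal with blocks S_i ∈ ℝ^{r_i×d_i}. Then transformed-gradient training of Θ with S is equivalent to simultaneously training each layer's adapter Λ_i (with Λ_i^(0) = 0, reparameterization Θ_i = Θ_i^(0) + S_iᵀ Λ_i) under any optimizer that acts blockwise (processes each block's compressed gradient with its own state). -/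
open Matrix

/-- Blockwise (per-layer) version of the gradient-transformation/adapter equivalence:
with a block-diagonal transformation given by `S i` on layer `i`, an optimizer acting
blockwise with per-block state, and adapters `Λ i` initialized to zero with equal
initial states, one has `Θ_i^(t) = Θ_i^(0) + S_iᵀ Λ_i^(t)` and equal states for all
`i` and `t`. -/
theorem blockwise_grad_transform_eq_adapter
    (K : ℕ) (ddim rdim : Fin K → ℕ) (Ξ : Fin K → Type*)
    (Optimizer : ∀ i, (Fin (rdim i) → ℝ) × Ξ i → (Fin (rdim i) → ℝ) × Ξ i)
    (S : ∀ i, Matrix (Fin (rdim i)) (Fin (ddim i)) ℝ)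
    (gradL : (∀ i, Fin (ddim i) → ℝ) → (∀ i, Fin (ddim i) → ℝ))
    (Θ : ℕ → ∀ i, Fin (ddim i) → ℝ) (ξ : ℕ → ∀ i, Ξ i)
    (Lam : ℕ → ∀ i, Fin (rdim i) → ℝ) (ζ : ℕ → ∀ i, Ξ i)
    (hΘ : ∀ t i, Θ (t + 1) i =
      Θ t i + (S i)ᵀ.mulVec (Optimizer i ((S i).mulVec (gradL (Θ t) i), ξ t i)).1)
    (hξ : ∀ t i, ξ (t + 1) i = (Optimizer i ((S i).mulVec (gradL (Θ t) i), ξ t i)).2)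
    (hLam0 : ∀ i, Lam 0 i = 0) (hζ0 : ζ 0 = ξ 0)
    (hLam : ∀ t i, Lam (t + 1) i =
      Lam t i + (Optimizer i ((S i).mulVec
        (gradL (fun j => Θ 0 j + (S j)ᵀ.mulVec (Lam t j)) i), ζ t i)).1)
    (hζ : ∀ t i, ζ (t + 1) i = (Optimizer i ((S i).mulVec
        (gradL (fun j => Θ 0 j + (S j)ᵀ.mulVec (Lam t j)) i), ζ t i)).2) :
    ∀ t i, Θ t i = Θ 0 i + (S i)ᵀ.mulVec (Lam t i) ∧ ξ t i = ζ t i := by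
  intro t
  induction t with
  | zero =>
    intro i
    refine ⟨?_, by rw [hζ0]⟩
    rw [hLam0, Matrix.mulVec_zero]
    simp
  | succ t ih =>
    have hTh : Θ t = fun j => Θ 0 j + (S j)ᵀ.mulVec (Lam t j) :=
      funext fun j => (ih j).1
    intro i
    constructor
    · rw [hΘ t i, hLam t i, Matrix.mulVec_add, (ih i).1, (ih i).2, hTh, add_assoc]
    · rw [hξ t i, hζ t i, (ih i).2, hTh]
end

section
/- Weight decay breaks the equivalence: with update rules Θ^(1) = Θ^(0) + Sᵀ Δ − λΘ^(0) (decay on full parameters) versus effective weight Θ^(0) + Sᵀ(Λ^(0) + δ − λΛ^(0)) (decay only on the adapter), where by the base equivalence Sᵀ δ = Sᵀ Δ when Λ^(0) = 0 and optimizer states match, the two one-step results differ by λ(Sᵀ Λ^(0) − Θ^(0)); in particular when Λ^(0) = 0 they differ by −λΘ^(0), which is nonzero whenever λ ≠ 0 and Θ^(0) ≠ 0. -/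
open Matrix

/-- Weight decay breaks the gradient-transformation/adapter equivalence: with decoupled
decay on the full parameter (`Θ^(1) = Θ^(0) + Sᵀ Δ − λ Θ^(0)`) versus decay only on the
adapter (effective weight `Θ̃ + Sᵀ(Λ^(0) + δ − λ Λ^(0))` with frozen base `Θ̃` where
`Θ^(0) = Θ̃ + Sᵀ Λ^(0)`), and equal compressed-space updates `δ = Δ`, the two one-step
results differ by `λ (Sᵀ Λ^(0) − Θ^(0))`; in particular when `Λ^(0) = 0` they differ by
`−λ Θ^(0)`, which is nonzero whenever `λ ≠ 0` and `Θ^(0) ≠ 0`. -/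
theorem weight_decay_breaks_equivalence
    (r d : ℕ) (lam : ℝ)
    (S : Matrix (Fin r) (Fin d) ℝ)
    (Θtilde Θ0 : Fin d → ℝ) (Lam0 Δ δ : Fin r → ℝ)
    (hΘ0 : Θ0 = Θtilde + Sᵀ.mulVec Lam0)
    (hδ : δ = Δ) :
    (Θ0 + Sᵀ.mulVec Δ - lam • Θ0) -
        (Θtilde + Sᵀ.mulVec (Lam0 + δ - lam • Lam0)) =
      lam • (Sᵀ.mulVec Lam0 - Θ0) ∧
      (Lam0 = 0 →
        (Θ0 + Sᵀ.mulVec Δ - lam • Θ0) -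
            (Θtilde + Sᵀ.mulVec (Lam0 + δ - lam • Lam0)) = -(lam • Θ0)) ∧
      (lam ≠ 0 → Θ0 ≠ 0 → Lam0 = 0 →
        (Θ0 + Sᵀ.mulVec Δ - lam • Θ0) -
            (Θtilde + Sᵀ.mulVec (Lam0 + δ - lam • Lam0)) ≠ 0) := by
  have key : (Θ0 + Sᵀ.mulVec Δ - lam • Θ0) -
      (Θtilde + Sᵀ.mulVec (Lam0 + δ - lam • Lam0)) = lam • (Sᵀ.mulVec Lam0 - Θ0) := by
    subst hδ hΘ0
    simp only [Matrix.mulVec_add, Matrix.mulVec_sub, Matrix.mulVec_smul, smul_sub, smul_add]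
    abel
  refine ⟨key, fun h0 => ?_, fun hl hΘ h0 => ?_⟩ <;>
    · rw [key, h0]
      simp [smul_sub]
      try exact ⟨hl, hΘ⟩
end

section
/- The equivalence is restored under adjusted weight decay: if in the adapter view one instead decays the effective weight, i.e., updates the frozen base via Θ_base^(t+1) = (1−λ)Θ_base^(t) and the adapter via Λ^(t+1) = (1−λ)Λ^(t) + δ^(t), then the effective weight Θ_base^(t) + Sᵀ Λ^(t) coincides for all t with the transformed-gradient trajectory Θ^(t+1) = (1−λ)Θ^(t) + Sᵀ Δ^(t) (assuming Λ^(0) = 0, Θ_base^(0) = Θ^(0), equal optimizer states, and gradients related by the chain rule as before). -/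
open Matrix

/-- Adjusted weight decay restores the equivalence: if in the adapter view the frozen base
decays as `Θ_base^(t+1) = (1−λ) Θ_base^(t)` and the adapter as
`Λ^(t+1) = (1−λ) Λ^(t) + δ^(t)`, then the effective weight `Θ_base^(t) + Sᵀ Λ^(t)`
coincides for all `t` with the transformed-gradient trajectory
`Θ^(t+1) = (1−λ) Θ^(t) + Sᵀ Δ^(t)` (with `Λ^(0) = 0`, `Θ_base^(0) = Θ^(0)`, equal
optimizer states, and gradients related by the chain rule). -/
theorem adjusted_weight_decay_preserves_equivalence
    (r d : ℕ) (lam : ℝ) (Ξ : Type*)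
    (Optimizer : (Fin r → ℝ) × Ξ → (Fin r → ℝ) × Ξ)
    (S : Matrix (Fin r) (Fin d) ℝ)
    (gradL : (Fin d → ℝ) → (Fin d → ℝ))
    (Θ : ℕ → Fin d → ℝ) (ξ : ℕ → Ξ)
    (Θbase : ℕ → Fin d → ℝ) (Lam : ℕ → Fin r → ℝ) (ζ : ℕ → Ξ)
    (hΘ : ∀ t, Θ (t + 1) =
      (1 - lam) • Θ t + Sᵀ.mulVec (Optimizer (S.mulVec (gradL (Θ t)), ξ t)).1)
    (hξ : ∀ t, ξ (t + 1) = (Optimizer (S.mulVec (gradL (Θ t)), ξ t)).2)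
    (hLam0 : Lam 0 = 0) (hbase0 : Θbase 0 = Θ 0) (hζ0 : ζ 0 = ξ 0)
    (hbase : ∀ t, Θbase (t + 1) = (1 - lam) • Θbase t)
    (hLam : ∀ t, Lam (t + 1) = (1 - lam) • Lam t +
      (Optimizer (S.mulVec (gradL (Θbase t + Sᵀ.mulVec (Lam t))), ζ t)).1)
    (hζ : ∀ t, ζ (t + 1) =
      (Optimizer (S.mulVec (gradL (Θbase t + Sᵀ.mulVec (Lam t))), ζ t)).2) :
    ∀ t, Θbase t + Sᵀ.mulVec (Lam t) = Θ t ∧ ξ t = ζ t := by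
  intro t
  induction t with
  | zero => simp [hLam0, hbase0, hζ0, Matrix.mulVec_zero]
  | succ n ih =>
    obtain ⟨heff, hst⟩ := ih
    constructor
    · rw [hbase n, hLam n, hΘ n, heff, ← hst, Matrix.mulVec_add,
        Matrix.mulVec_smul, ← heff, smul_add]
      abel
    · rw [hξ n, hζ n, heff, hst]
end

section
/- Swapping the projection every T steps preserves the correspondence: let training proceed in phases g = 0, 1, 2, … with projection P^(g), where the transformed-gradient view updates W within phase g as W ← W + (P^(g))ᵀ Δ. Then the trajectory equals that of ReLoRA-style training where at the start of each phase the current adapter Pᵀ A is merged into the base weight (W_base ← W_base + (P^(g−1))ᵀ A^(g−1,L)), A is reset to 0, and the frozen side is set to (P^(g))ᵀ, with the optimizer state handled identically (e.g., reset) in both views at phase boundaries. -/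
open Matrix

/-- Swapping the projection every phase preserves the GaLore / one-sided-LoRA
correspondence: with per-phase projections `P g`, GaLore updates
`W^(g,l+1) = W^(g,l) + (P g)ᵀ Δ^(g,l)` and phase continuity `W^(g+1,0) = W^(g,L)`, while
ReLoRA-style training merges `(P g)ᵀ A^(g,L)` into the base at each phase boundary,
resets `A` to zero, and swaps the frozen side to `(P (g+1))ᵀ`; with optimizer state
handled identically at phase boundaries, the effective weight
`W_base^(g) + (P g)ᵀ A^(g,l)` equals the GaLore weight `W^(g,l)` for all `g, l`. -/
theorem phase_swapped_galore_eq_relora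
    (m n d Lsteps : ℕ) (Ξ : Type*)
    (Optimizer : Matrix (Fin d) (Fin n) ℝ × Ξ → Matrix (Fin d) (Fin n) ℝ × Ξ)
    (P : ℕ → Matrix (Fin d) (Fin m) ℝ)
    (gradL : Matrix (Fin m) (Fin n) ℝ → Matrix (Fin m) (Fin n) ℝ)
    (W : ℕ → ℕ → Matrix (Fin m) (Fin n) ℝ) (ξ : ℕ → ℕ → Ξ)
    (Wbase : ℕ → Matrix (Fin m) (Fin n) ℝ)
    (A : ℕ → ℕ → Matrix (Fin d) (Fin n) ℝ) (ζ : ℕ → ℕ → Ξ)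
    -- GaLore view: within phase `g`, transform gradients by `P g` and update via `(P g)ᵀ`
    (hW : ∀ g l, W g (l + 1) = W g l + (P g)ᵀ * (Optimizer (P g * gradL (W g l), ξ g l)).1)
    (hξ : ∀ g l, ξ g (l + 1) = (Optimizer (P g * gradL (W g l), ξ g l)).2)
    (hWphase : ∀ g, W (g + 1) 0 = W g Lsteps)
    -- ReLoRA view: train only `A` with frozen base `Wbase g` and frozen side `(P g)ᵀ`
    (hA0 : ∀ g, A g 0 = 0)
    (hA : ∀ g l, A g (l + 1) =
      A g l + (Optimizer (P g * gradL (Wbase g + (P g)ᵀ * A g l), ζ g l)).1)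
    (hζ : ∀ g l, ζ g (l + 1) =
      (Optimizer (P g * gradL (Wbase g + (P g)ᵀ * A g l), ζ g l)).2)
    -- at each phase boundary the adapter is merged into the base
    (hmerge : ∀ g, Wbase (g + 1) = Wbase g + (P g)ᵀ * A g Lsteps)
    (hbase0 : Wbase 0 = W 0 0)
    -- optimizer state handled identically (e.g. reset) in both views at phase starts
    (hstate : ∀ g, ζ g 0 = ξ g 0) :
    ∀ g l, Wbase g + (P g)ᵀ * A g l = W g l ∧ ξ g l = ζ g l := by
  -- first prove the per-phase invariant from the phase-start condition
  have key : ∀ g, Wbase g = W g 0 →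
      ∀ l, Wbase g + (P g)ᵀ * A g l = W g l ∧ ξ g l = ζ g l := by
    intro g hg l
    induction l with
    | zero => simp [hA0, hg, (hstate g).symm]
    | succ l ih =>
      obtain ⟨h1, h2⟩ := ih
      constructor
      · rw [hA, hW, Matrix.mul_add, ← add_assoc, h1, h2]
      · rw [hξ, hζ, h1, h2]
  have hbase : ∀ g, Wbase g = W g 0 := by
    intro g
    induction g with
    | zero => exact hbase0
    | succ g ih =>
      rw [hmerge, hWphase, ← (key g ih Lsteps).1]
  intro g l
  exact key g (hbase g) l
end
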